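/- arXiv:2105.06146 — 4 statements merged into one kernel-verified Lean document; each statement's English description precedes it below -/
import Mathlib

section
/- With the matrices p, d, m, n defined from real numbers ε11, ε12, ε22, ξ0, ξ1, ξ2 subject to r² = ε22·ξ1² − 2ε12·ξ1·ξ2 + ε11·ξ2² > 0, one has the diagonalization identity m · d · n = p as 3×3 complex matrices. -/
set_option maxHeartbeats 1000000


open Matrix Complex

/-- diagonalization `m · d · n = p` of the principal symbol of the
2d Maxwell operator. -/
theorem statement5 (ε11 ε12 ε22 ξ0 ξ1 ξ2 : ℝ)
    (hr : 0 < ε22 * ξ1 ^ 2 - 2 * ε12 * ξ1 * ξ2 + ε11 * ξ2 ^ 2) :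
    let r : ℝ := Real.sqrt (ε22 * ξ1 ^ 2 - 2 * ε12 * ξ1 * ξ2 + ε11 * ξ2 ^ 2)
    let ξ1s : ℂ := ((ξ1 / r : ℝ) : ℂ)
    let ξ2s : ℂ := ((ξ2 / r : ℝ) : ℂ)
    let p : Matrix (Fin 3) (Fin 3) ℂ :=
      Complex.I • !![(ξ0 : ℂ), 0, -(ξ2 : ℂ);
                     0, (ξ0 : ℂ), (ξ1 : ℂ);
                     -(ξ2 : ℂ) * (ε11 : ℂ) + (ξ1 : ℂ) * (ε12 : ℂ),
                       (ξ1 : ℂ) * (ε22 : ℂ) - (ξ2 : ℂ) * (ε12 : ℂ), (ξ0 : ℂ)]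
    let d : Matrix (Fin 3) (Fin 3) ℂ :=
      Matrix.diagonal ![Complex.I * (ξ0 : ℂ), Complex.I * ((ξ0 : ℂ) - (r : ℂ)),
        Complex.I * ((ξ0 : ℂ) + (r : ℂ))]
    let m : Matrix (Fin 3) (Fin 3) ℂ :=
      !![-ξ1s * (ε22 : ℂ) + ξ2s * (ε12 : ℂ), ξ2s, -ξ2s;
         ξ1s * (ε12 : ℂ) - ξ2s * (ε11 : ℂ), -ξ1s, ξ1s;
         0, 1, 1]
    let n : Matrix (Fin 3) (Fin 3) ℂ :=
      !![-ξ1s, -ξ2s, 0;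
         (ξ2s * (ε11 : ℂ) - ξ1s * (ε12 : ℂ)) / 2, (-ξ1s * (ε22 : ℂ) + ξ2s * (ε12 : ℂ)) / 2, 1 / 2;
         (-ξ2s * (ε11 : ℂ) + ξ1s * (ε12 : ℂ)) / 2, (ξ1s * (ε22 : ℂ) - ξ2s * (ε12 : ℂ)) / 2, 1 / 2]
    m * d * n = p := by
  intro r ξ1s ξ2s p d m n
  have hr0 : r ≠ 0 := ne_of_gt (Real.sqrt_pos.mpr hr)
  have hR0 : (r : ℂ) ≠ 0 := by exact_mod_cast hr0
  have hR2 : (r : ℂ) ^ 2 =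
      (ε22 : ℂ) * (ξ1 : ℂ) ^ 2 - 2 * (ε12 : ℂ) * (ξ1 : ℂ) * (ξ2 : ℂ)
        + (ε11 : ℂ) * (ξ2 : ℂ) ^ 2 := by
    have : r ^ 2 = ε22 * ξ1 ^ 2 - 2 * ε12 * ξ1 * ξ2 + ε11 * ξ2 ^ 2 :=
      Real.sq_sqrt hr.le
    exact_mod_cast this
  have haR : ξ1s * (r : ℂ) = (ξ1 : ℂ) := by
    show ((ξ1 / r : ℝ) : ℂ) * (r : ℂ) = (ξ1 : ℂ)
    push_cast
    field_simp
  have hbR : ξ2s * (r : ℂ) = (ξ2 : ℂ) := by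
    show ((ξ2 / r : ℝ) : ℂ) * (r : ℂ) = (ξ2 : ℂ)
    push_cast
    field_simp
  have hS : (ε22 : ℂ) * ξ1s ^ 2 - 2 * (ε12 : ℂ) * ξ1s * ξ2s + (ε11 : ℂ) * ξ2s ^ 2 = 1 := by
    have h : ((ε22 : ℂ) * ξ1s ^ 2 - 2 * (ε12 : ℂ) * ξ1s * ξ2s + (ε11 : ℂ) * ξ2s ^ 2)
        * (r : ℂ) ^ 2 = 1 * (r : ℂ) ^ 2 := by
      linear_combination (ε22 : ℂ) * (ξ1s * (r : ℂ) + (ξ1 : ℂ)) * haR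
        - 2 * (ε12 : ℂ) * (ξ2s * (r : ℂ)) * haR - 2 * (ε12 : ℂ) * (ξ1 : ℂ) * hbR
        + (ε11 : ℂ) * (ξ2s * (r : ℂ) + (ξ2 : ℂ)) * hbR - hR2
    exact mul_right_cancel₀ (pow_ne_zero 2 hR0) h
  ext i j
  fin_cases i <;> fin_cases j <;>
    simp [p, d, m, n, Matrix.mul_apply, Fin.sum_univ_three, Matrix.vecMul_diagonal,
      Matrix.vecHead, Matrix.vecTail]
  all_goals first
    | ring1
    | linear_combination Complex.I * (ξ0 : ℂ) * hS
    | linear_combination -Complex.I * hbR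
    | linear_combination Complex.I * haR
    | linear_combination Complex.I * (ε12 : ℂ) * haR - Complex.I * (ε11 : ℂ) * hbR
    | linear_combination Complex.I * (ε22 : ℂ) * haR - Complex.I * (ε12 : ℂ) * hbR
end

section
/- With the matrix p defined from real numbers ε11, ε12, ε22, ξ0, ξ1, ξ2 subject to r² = ε22·ξ1² − 2ε12·ξ1·ξ2 + ε11·ξ2² > 0, for every μ ∈ ℂ one has det(p − μ·I₃) = (i·ξ0 − μ)·(i·(ξ0 − r) − μ)·(i·(ξ0 + r) − μ). In particular the eigenvalues of the principal symbol p are exactly i·ξ0, i·(ξ0 − r) and i·(ξ0 + r). -/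
open Matrix Complex

/-- the characteristic polynomial of the principal symbol `p` of the
2d Maxwell operator factorizes, so its eigenvalues are `i·ξ0`, `i·(ξ0 − r)`, `i·(ξ0 + r)`. -/
theorem statement7 (ε11 ε12 ε22 ξ0 ξ1 ξ2 : ℝ)
    (hr : 0 < ε22 * ξ1 ^ 2 - 2 * ε12 * ξ1 * ξ2 + ε11 * ξ2 ^ 2) :
    let r : ℝ := Real.sqrt (ε22 * ξ1 ^ 2 - 2 * ε12 * ξ1 * ξ2 + ε11 * ξ2 ^ 2)
    let p : Matrix (Fin 3) (Fin 3) ℂ :=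
      Complex.I • !![(ξ0 : ℂ), 0, -(ξ2 : ℂ);
                     0, (ξ0 : ℂ), (ξ1 : ℂ);
                     -(ξ2 : ℂ) * (ε11 : ℂ) + (ξ1 : ℂ) * (ε12 : ℂ),
                       (ξ1 : ℂ) * (ε22 : ℂ) - (ξ2 : ℂ) * (ε12 : ℂ), (ξ0 : ℂ)]
    ∀ μ : ℂ, (p - μ • (1 : Matrix (Fin 3) (Fin 3) ℂ)).det =
      (Complex.I * (ξ0 : ℂ) - μ) * (Complex.I * ((ξ0 : ℂ) - (r : ℂ)) - μ)
        * (Complex.I * ((ξ0 : ℂ) + (r : ℂ)) - μ) := by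
  intro r p μ
  have hr2 : (r : ℂ) ^ 2 = (ε22 : ℂ) * ξ1 ^ 2 - 2 * ε12 * ξ1 * ξ2 + ε11 * ξ2 ^ 2 := by
    have : r ^ 2 = ε22 * ξ1 ^ 2 - 2 * ε12 * ξ1 * ξ2 + ε11 * ξ2 ^ 2 :=
      Real.sq_sqrt hr.le
    exact_mod_cast congrArg (Complex.ofReal) this
  show (p - μ • (1 : Matrix (Fin 3) (Fin 3) ℂ)).det = _
  simp only [p, Matrix.det_fin_three, Matrix.sub_apply, Matrix.smul_apply,
    Matrix.one_apply, Matrix.cons_val', Matrix.cons_val_zero, Matrix.cons_val_one,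
    Matrix.head_cons, Matrix.head_fin_const, Matrix.cons_val_fin_one, Matrix.empty_val',
    Matrix.cons_val_two, Matrix.tail_cons, smul_eq_mul]
  norm_num [Fin.ext_iff]
  simp [Matrix.vecHead, Matrix.vecTail]
  linear_combination (Complex.I * ξ0 - μ) * Complex.I ^ 2 * hr2
end

section
/- Let m ≥ 1, p ∈ [1, ∞], and let a : ℝ^m × ℝ^m → ℂ be a bounded continuous symbol with a(x, ξ) = 0 whenever |ξ| > 2, such that for each x the map ξ ↦ a(x, ξ) is (m+1)-times continuously differentiable and sup_{x ∈ ℝ^m} Σ_{|α| ≤ m+1} ‖∂_ξ^α a(x, ·)‖_{L¹(ℝ^m)} ≤ C. Then there is a constant K depending only on m such that for every Schwartz function f : ℝ^m → ℂ one has ‖a(x,D)f‖_{L^p(ℝ^m)} ≤ K·C·‖f‖_{L^p(ℝ^m)}, where a(x,D)f(x) = (2π)^{-m} ∫_{ℝ^m} e^{i x·ξ} a(x, ξ) f̂(ξ) dξ and f̂(ξ) = ∫_{ℝ^m} e^{−i y·ξ} f(y) dy. -/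
open MeasureTheory
open scoped ENNReal

/-- The Fourier transform `f̂(ξ) = ∫ e^{−i y·ξ} f(y) dy`. -/
noncomputable def fourierInt {m : ℕ} (f : EuclideanSpace ℝ (Fin m) → ℂ)
    (ξ : EuclideanSpace ℝ (Fin m)) : ℂ :=
  ∫ y : EuclideanSpace ℝ (Fin m), Complex.exp (-Complex.I * ((inner ℝ y ξ : ℝ) : ℂ)) * f y

/-- The pseudo-differential operator `a(x,D)f(x) = (2π)^{-m} ∫ e^{i x·ξ} a(x,ξ) f̂(ξ) dξ`. -/
noncomputable def symbOp {m : ℕ}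
    (a : EuclideanSpace ℝ (Fin m) × EuclideanSpace ℝ (Fin m) → ℂ)
    (f : EuclideanSpace ℝ (Fin m) → ℂ) (x : EuclideanSpace ℝ (Fin m)) : ℂ :=
  (((2 * Real.pi) ^ m)⁻¹ : ℝ) •
    ∫ ξ : EuclideanSpace ℝ (Fin m),
      Complex.exp (Complex.I * ((inner ℝ x ξ : ℝ) : ℂ)) * a (x, ξ) * fourierInt f ξ

open Real Complex
open scoped FourierTransform RealInnerProductSpace

namespace Statement8Aux


variable {m : ℕ}

local notation "𝔼" => EuclideanSpace ℝ (Fin m)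

lemma shiftL (G : 𝔼 → ℝ≥0∞) (hG : Measurable G) (x : 𝔼) :
    ∫⁻ y, G (x - y) = ∫⁻ y, G y :=
  (Measure.measurePreserving_sub_left volume x).lintegral_comp hG

lemma shiftR (G : 𝔼 → ℝ≥0∞) (hG : Measurable G) (y : 𝔼) :
    ∫⁻ x, G (x - y) = ∫⁻ x, G x :=
  (measurePreserving_sub_right volume y).lintegral_comp hG

lemma swap_aux (G h : 𝔼 → ℝ≥0∞) (hG : Measurable G) (hh : Measurable h) :
    ∫⁻ x, ∫⁻ y, G (x - y) * h y = (∫⁻ z, G z) * ∫⁻ y, h y := by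
  rw [lintegral_lintegral_swap
    (((hG.comp (measurable_fst.sub measurable_snd)).mul (hh.comp measurable_snd)).aemeasurable)]
  have : ∀ y : 𝔼, ∫⁻ x, G (x - y) * h y = (∫⁻ z, G z) * h y := by
    intro y
    rw [lintegral_mul_const _ (show Measurable fun x : 𝔼 => G (x - y) from hG.comp (measurable_sub_const y)), shiftR G hG y]
  simp_rw [this]
  rw [lintegral_const_mul _ hh]

lemma young_lintegral (G h : 𝔼 → ℝ≥0∞) (hG : Measurable G) (hh : Measurable h)
    {p : ℝ} (hp : 1 ≤ p) :
    ∫⁻ x, (∫⁻ y, G (x - y) * h y) ^ p ≤ (∫⁻ z, G z) ^ p * ∫⁻ x, h x ^ p := by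
  have hp0 : (0:ℝ) < p := lt_of_lt_of_le one_pos hp
  by_cases hz : ∫⁻ x, h x ^ p = 0
  · have hh0 : h =ᵐ[volume] 0 := by
      have h1 := (lintegral_eq_zero_iff (hh.pow_const p)).1 hz
      filter_upwards [h1] with x hx
      rcases (ENNReal.rpow_eq_zero_iff).1 hx with ⟨h2, _⟩ | ⟨_, h3⟩
      · exact h2
      · exact absurd h3 (not_lt.2 hp0.le)
    have : ∀ x : 𝔼, (∫⁻ y, G (x - y) * h y) = 0 := by
      intro x
      have : (fun y : 𝔼 => G (x - y) * h y) =ᵐ[volume] 0 := by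
        filter_upwards [hh0] with y hy
        simp [hy]
      rw [lintegral_congr_ae this]; simp
    simp_rw [this]
    simp [ENNReal.zero_rpow_of_pos hp0]
  by_cases hG0 : ∫⁻ z, G z = 0
  · have hGz : G =ᵐ[volume] 0 := (lintegral_eq_zero_iff hG).1 hG0
    have : ∀ x : 𝔼, (∫⁻ y, G (x - y) * h y) = 0 := by
      intro x
      have hc : (fun y : 𝔼 => G (x - y)) =ᵐ[volume] 0 :=
        (Measure.measurePreserving_sub_left volume x).quasiMeasurePreserving.ae_eq hGz
      have : (fun y : 𝔼 => G (x - y) * h y) =ᵐ[volume] 0 := by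
        filter_upwards [hc] with y hy
        simp only [Pi.zero_apply] at hy ⊢
        rw [hy, zero_mul]
      rw [lintegral_congr_ae this]; simp
    simp_rw [this]
    simp [ENNReal.zero_rpow_of_pos hp0]
  by_cases hGtop : ∫⁻ z, G z = ⊤
  · rw [hGtop, ENNReal.top_rpow_of_pos hp0, ENNReal.top_mul hz]
    exact le_top
  rcases eq_or_lt_of_le hp with hp1 | hp1
  · subst hp1
    simp only [ENNReal.rpow_one]
    exact le_of_eq (swap_aux G h hG hh)
  · set q : ℝ := p.conjExponent with hqdef
    have hpq : p.HolderConjugate q := Real.HolderConjugate.conjExponent hp1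
    have hWmeas : Measurable fun x : 𝔼 => ∫⁻ y, G (x - y) * h y ^ p :=
      Measurable.lintegral_prod_right
        ((hG.comp (measurable_fst.sub measurable_snd)).mul
          ((hh.comp measurable_snd).pow_const p))
    have key : ∀ x : 𝔼, (∫⁻ y, G (x - y) * h y) ≤
        (∫⁻ z, G z) ^ (1/q) * (∫⁻ y, G (x - y) * h y ^ p) ^ (1/p) := by
      intro x
      have hGx : Measurable fun y : 𝔼 => G (x - y) := hG.comp (measurable_const.sub measurable_id)
      have step1 : ∀ y : 𝔼, G (x - y) * h y
          = ((fun y => G (x - y) ^ (1/q)) * fun y => G (x - y) ^ (1/p) * h y) y := by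
        intro y
        simp only [Pi.mul_apply]
        rw [← mul_assoc, ← ENNReal.rpow_add_of_nonneg _ _ hpq.symm.one_div_nonneg
          hpq.one_div_nonneg]
        rw [add_comm, one_div, one_div, hpq.inv_add_inv_eq_one, ENNReal.rpow_one]
      calc (∫⁻ y, G (x - y) * h y)
          = ∫⁻ y, ((fun y => G (x - y) ^ (1/q)) * fun y => G (x - y) ^ (1/p) * h y) y :=
            lintegral_congr step1
        _ ≤ (∫⁻ y, (G (x - y) ^ (1/q)) ^ q) ^ (1/q) *
              (∫⁻ y, (G (x - y) ^ (1/p) * h y) ^ p) ^ (1/p) :=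
            ENNReal.lintegral_mul_le_Lp_mul_Lq volume hpq.symm
              ((hGx.pow_const _).aemeasurable) (((hGx.pow_const _).mul hh).aemeasurable)
        _ = (∫⁻ z, G z) ^ (1/q) * (∫⁻ y, G (x - y) * h y ^ p) ^ (1/p) := by
            congr 1
            · congr 1
              have hyy : ∀ y : 𝔼, (G (x - y) ^ (1/q)) ^ q = G (x - y) := fun y => by
                rw [← ENNReal.rpow_mul, one_div, inv_mul_cancel₀ hpq.symm.ne_zero,
                  ENNReal.rpow_one]
              simp_rw [hyy]
              exact shiftL G hG x
            · congr 1
              refine lintegral_congr fun y => ?_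
              rw [ENNReal.mul_rpow_of_nonneg _ _ hp0.le, ← ENNReal.rpow_mul, one_div,
                inv_mul_cancel₀ hpq.ne_zero, ENNReal.rpow_one]
    calc ∫⁻ x, (∫⁻ y, G (x - y) * h y) ^ p
        ≤ ∫⁻ x, ((∫⁻ z, G z) ^ (1/q) * (∫⁻ y, G (x - y) * h y ^ p) ^ (1/p)) ^ p :=
          lintegral_mono fun x => ENNReal.rpow_le_rpow (key x) hp0.le
      _ = ∫⁻ x, (∫⁻ z, G z) ^ (p/q) * (∫⁻ y, G (x - y) * h y ^ p) := by
          refine lintegral_congr fun x => ?_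
          rw [ENNReal.mul_rpow_of_nonneg _ _ hp0.le, ← ENNReal.rpow_mul, ← ENNReal.rpow_mul,
            one_div, one_div, inv_mul_eq_div, inv_mul_cancel₀ hp0.ne', ENNReal.rpow_one]
      _ = (∫⁻ z, G z) ^ (p/q) * ∫⁻ x, (∫⁻ y, G (x - y) * h y ^ p) := lintegral_const_mul _ hWmeas
      _ = (∫⁻ z, G z) ^ (p/q) * ((∫⁻ z, G z) * ∫⁻ x, h x ^ p) := by
          rw [swap_aux G (fun y => h y ^ p) hG (hh.pow_const p)]
      _ = (∫⁻ z, G z) ^ p * ∫⁻ x, h x ^ p := by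
          rw [← mul_assoc]
          congr 1
          have h1 : (∫⁻ z, G z) ^ (p/q) * (∫⁻ z, G z)
              = (∫⁻ z, G z) ^ (p/q) * (∫⁻ z, G z) ^ (1:ℝ) := by rw [ENNReal.rpow_one]
          rw [h1, ← ENNReal.rpow_add _ _ hG0 hGtop]
          congr 1
          have h2 := hpq.div_conj_eq_sub_one
          linarith



lemma young_eLpNorm (G : 𝔼 → ℝ≥0∞) (hG : Measurable G) (F f : 𝔼 → ℂ)
    (hf : Continuous f)
    (hbd : ∀ x, (‖F x‖₊ : ℝ≥0∞) ≤ ∫⁻ y, G (x - y) * ‖f y‖₊) (p : ℝ≥0∞) (hp : 1 ≤ p) :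
    eLpNorm F p volume ≤ (∫⁻ z, G z) * eLpNorm f p volume := by
  have hhm : Measurable fun y : 𝔼 => (‖f y‖₊ : ℝ≥0∞) :=
    hf.measurable.nnnorm.coe_nnreal_ennreal
  by_cases htop : p = ∞
  · subst htop
    rw [eLpNorm_exponent_top, eLpNorm_exponent_top]
    have hb : ∀ x, (‖F x‖₊ : ℝ≥0∞) ≤ (∫⁻ z, G z) * eLpNormEssSup f volume := by
      intro x
      refine (hbd x).trans ?_
      have h1 : ∫⁻ y, G (x - y) * ‖f y‖₊ ≤ ∫⁻ y, G (x - y) * eLpNormEssSup f volume := by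
        refine lintegral_mono_ae ?_
        filter_upwards [enorm_ae_le_eLpNormEssSup f volume] with y hy
        exact mul_le_mul_right hy _
      refine h1.trans (le_of_eq ?_)
      rw [lintegral_mul_const _
        (show Measurable fun y : 𝔼 => G (x - y) from hG.comp (measurable_const.sub measurable_id)),
        shiftL G hG x, mul_comm]
    exact essSup_le_of_ae_le _ (Filter.Eventually.of_forall hb)
  · have hp0 : p ≠ 0 := by
      intro h; rw [h] at hp; exact absurd hp (by simp)
    rw [eLpNorm_eq_lintegral_rpow_enorm_toReal hp0 htop, eLpNorm_eq_lintegral_rpow_enorm_toReal hp0 htop]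
    set r := p.toReal with hrdef
    have hr : 1 ≤ r := by
      rw [← ENNReal.toReal_one]
      exact ENNReal.toReal_mono htop hp
    have hr0 : (0:ℝ) < r := lt_of_lt_of_le one_pos hr
    have main := young_lintegral G (fun y => (‖f y‖₊ : ℝ≥0∞)) hG hhm hr
    have step : ∫⁻ x, (‖F x‖₊ : ℝ≥0∞) ^ r ≤ (∫⁻ z, G z) ^ r * ∫⁻ x, (‖f x‖₊ : ℝ≥0∞) ^ r :=
      (lintegral_mono fun x => ENNReal.rpow_le_rpow (hbd x) hr0.le).trans main
    have := ENNReal.rpow_le_rpow step (by positivity : (0:ℝ) ≤ 1 / r)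
    refine le_trans this (le_of_eq ?_)
    rw [ENNReal.mul_rpow_of_nonneg _ _ (by positivity), ← ENNReal.rpow_mul,
      mul_one_div, div_self hr0.ne', ENNReal.rpow_one]
    rfl



lemma pow_one_add_le (t : ℝ) (ht : 0 ≤ t) (n : ℕ) :
    (1 + t) ^ n ≤ 2 ^ n * (1 + t ^ n) := by
  rcases le_total t 1 with h | h
  · have h1 : (1 + t) ^ n ≤ 2 ^ n := pow_le_pow_left₀ (by linarith) (by linarith) _
    have h2 : (0:ℝ) ≤ t ^ n := pow_nonneg ht n
    nlinarith [pow_nonneg (by norm_num : (0:ℝ) ≤ 2) n]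
  · have h1 : (1 + t) ^ n ≤ (2 * t) ^ n := pow_le_pow_left₀ (by linarith) (by linarith) _
    have h2 : (2 * t) ^ n = 2 ^ n * t ^ n := mul_pow 2 t n
    nlinarith [pow_nonneg (by norm_num : (0:ℝ) ≤ 2) n, pow_nonneg ht n]

lemma kernel_decay {C : ℝ} (g : 𝔼 → ℂ) (hgc : Continuous g)
    (hgs : ∀ ξ : 𝔼, 2 < ‖ξ‖ → g ξ = 0) (hgd : ContDiff ℝ (m + 1 : ℕ) g)
    (hgC : (∑ k ∈ Finset.range (m + 2), ∫ ξ : 𝔼, ‖iteratedFDeriv ℝ k g ξ‖) ≤ C) (w : 𝔼) :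
    ‖𝓕 g w‖ * (1 + ‖w‖) ^ (m + 1) ≤ 2 ^ (m + 1) * (1 + 2 ^ (m + 1)) * C := by
  have hsupp : HasCompactSupport g := by
    refine HasCompactSupport.intro (isCompact_closedBall (0:𝔼) 2) fun ξ hξ => hgs ξ ?_
    simpa [Metric.mem_closedBall, dist_zero_right, not_le] using hξ
  have hint : ∀ n : ℕ, n ≤ m + 1 → Integrable (iteratedFDeriv ℝ n g) := by
    intro n hn
    exact (hgd.continuous_iteratedFDeriv (by exact_mod_cast hn)).integrable_of_hasCompactSupport
      (hsupp.iteratedFDeriv n)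
  have hterm : ∀ n ∈ Finset.range (m + 2), (0:ℝ) ≤ ∫ ξ : 𝔼, ‖iteratedFDeriv ℝ n g ξ‖ :=
    fun n _ => integral_nonneg fun _ => norm_nonneg _
  have hC0 : 0 ≤ C := le_trans (Finset.sum_nonneg hterm) hgC
  have B0 : ‖𝓕 g w‖ ≤ C := by
    have h1 : ‖𝓕 g w‖ ≤ ∫ ξ : 𝔼, ‖g ξ‖ :=
      VectorFourier.norm_fourierIntegral_le_integral_norm 𝐞 volume (innerₗ 𝔼) g w
    refine h1.trans ?_
    have h2 : ∫ ξ : 𝔼, ‖g ξ‖ = ∫ ξ : 𝔼, ‖iteratedFDeriv ℝ 0 g ξ‖ := by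
      simp [norm_iteratedFDeriv_zero]
    rw [h2]
    exact le_trans (Finset.single_le_sum hterm (by simp)) hgC
  have B1 : ‖w‖ ^ (m + 1) * ‖𝓕 g w‖ ≤ 2 ^ (m + 1) * C := by
    have h'f : ∀ (k n : ℕ), (k:ℕ∞) ≤ (0:ℕ∞) → (n:ℕ∞) ≤ ((m+1:ℕ):ℕ∞) →
        Integrable (fun v : 𝔼 => ‖v‖ ^ k * ‖iteratedFDeriv ℝ n g v‖) volume := by
      intro k n hk hn
      have hk0 : k = 0 := by exact_mod_cast le_antisymm hk (zero_le)
      subst hk0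
      simp only [pow_zero, one_mul]
      exact (hint n (by exact_mod_cast hn)).norm
    have H := Real.pow_mul_norm_iteratedFDeriv_fourier_le (K := (0:ℕ∞))
      (N := ((m+1:ℕ):ℕ∞)) (by exact_mod_cast hgd) h'f (k := 0) (n := m+1) le_rfl le_rfl w
    simp only [norm_iteratedFDeriv_zero, pow_zero, one_mul, Nat.cast_zero, mul_zero,
      zero_add] at H
    rw [Finset.sum_product] at H
    simp only [Finset.range_one, Finset.sum_singleton, pow_zero, one_mul] at H
    refine H.trans ?_
    have h2 : (0:ℝ) ≤ 2 ^ (m+1) := by positivity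
    exact mul_le_mul_of_nonneg_left hgC h2
  have hcomb := pow_one_add_le ‖w‖ (norm_nonneg w) (m + 1)
  have hF0 : (0:ℝ) ≤ ‖𝓕 g w‖ := norm_nonneg _
  nlinarith [mul_le_mul_of_nonneg_left hcomb hF0, pow_nonneg (norm_nonneg w) (m+1),
    mul_le_mul_of_nonneg_left B0 (by positivity : (0:ℝ) ≤ (2:ℝ)^(m+1)),
    mul_le_mul_of_nonneg_left B1 (by positivity : (0:ℝ) ≤ (2:ℝ)^(m+1))]

lemma norm_exp_I_mul (r : ℝ) : ‖Complex.exp (Complex.I * r)‖ = 1 := by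
  rw [mul_comm]; exact Complex.norm_exp_ofReal_mul_I r

lemma norm_exp_neg_I_mul (r : ℝ) : ‖Complex.exp (-Complex.I * r)‖ = 1 := by
  have h : (-Complex.I * r : ℂ) = ((-r : ℝ) : ℂ) * Complex.I := by push_cast; ring
  rw [h]; exact Complex.norm_exp_ofReal_mul_I (-r)

noncomputable def c4 (m : ℕ) : ℝ :=
  ((2 * π) ^ m)⁻¹ * ((2 ^ (m + 1) * (1 + 2 ^ (m + 1))) * (2 * π) ^ (m + 1))

lemma c4_pos (m : ℕ) : 0 < c4 m := by
  have := pi_pos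
  unfold c4
  positivity

lemma symbOp_pointwise {C : ℝ}
    (a : 𝔼 × 𝔼 → ℂ) (ha : Continuous a)
    (hs : ∀ x ξ : 𝔼, 2 < ‖ξ‖ → a (x, ξ) = 0)
    (hd : ∀ x : 𝔼, ContDiff ℝ (m + 1 : ℕ) fun ξ => a (x, ξ))
    (hC : ∀ x : 𝔼, (∑ k ∈ Finset.range (m + 2),
      ∫ ξ : 𝔼, ‖iteratedFDeriv ℝ k (fun ζ => a (x, ζ)) ξ‖) ≤ C)
    (f : SchwartzMap 𝔼 ℂ) (x : 𝔼) :
    (‖symbOp a (⇑f) x‖₊ : ℝ≥0∞) ≤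
      ∫⁻ y, ENNReal.ofReal (c4 m * C * (((1 + ‖x - y‖) ^ (m + 1))⁻¹)) * ‖f y‖₊ := by
  have hC0 : 0 ≤ C := by
    refine le_trans (Finset.sum_nonneg fun n _ => ?_) (hC x)
    exact integral_nonneg fun _ => norm_nonneg _
  have hgc : Continuous fun ξ : 𝔼 => a (x, ξ) := ha.comp (continuous_const.prodMk continuous_id)
  have hsuppg : HasCompactSupport fun ξ : 𝔼 => a (x, ξ) := by
    refine HasCompactSupport.intro (isCompact_closedBall (0:𝔼) 2) fun ξ hξ => hs x ξ ?_
    simpa [Metric.mem_closedBall, dist_zero_right, not_le] using hξ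
  have hgint : Integrable fun ξ : 𝔼 => a (x, ξ) := hgc.integrable_of_hasCompactSupport hsuppg
  have hfc : Continuous f := f.continuous
  have hfint : Integrable (⇑f) := f.integrable
  -- the kernel
  set J : 𝔼 → ℂ := fun z => ∫ ξ : 𝔼, Complex.exp (Complex.I * ((inner ℝ z ξ : ℝ) : ℂ)) * a (x, ξ)
    with hJdef
  -- Step A : J in terms of the Fourier transform
  have stepA : ∀ z : 𝔼, J z = 𝓕 (fun ξ : 𝔼 => a (x, ξ)) ((-(2 * π)⁻¹ : ℝ) • z) := by
    intro z
    rw [hJdef, Real.fourier_eq']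
    refine congrArg (integral volume) (funext fun v => ?_)
    rw [smul_eq_mul]
    congr 1
    have h1 : -2 * π * (inner ℝ v ((-(2 * π)⁻¹ : ℝ) • z) : ℝ) = (inner ℝ z v : ℝ) := by
      rw [real_inner_smul_right, real_inner_comm]
      have hπ : (2 * π) ≠ 0 := by positivity
      field_simp
    rw [h1, mul_comm]
  -- Step B : decay bound on J
  have stepB : ∀ z : 𝔼, ‖J z‖ ≤
      ((2 ^ (m + 1) * (1 + 2 ^ (m + 1))) * (2 * π) ^ (m + 1)) * C
        * (((1 + ‖z‖) ^ (m + 1))⁻¹) := by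
    intro z
    set w : 𝔼 := (-(2 * π)⁻¹ : ℝ) • z with hwdef
    have hw : ‖w‖ = (2 * π)⁻¹ * ‖z‖ := by
      rw [hwdef, norm_smul, Real.norm_eq_abs, abs_neg, abs_of_pos (by positivity)]
    have hkd := kernel_decay (fun ξ : 𝔼 => a (x, ξ)) hgc (hs x) (hd x) (hC x) w
    have hz1 : 1 + ‖z‖ ≤ (2 * π) * (1 + ‖w‖) := by
      rw [hw, mul_add, mul_one, ← mul_assoc, mul_inv_cancel₀ (by positivity : (2*π) ≠ 0), one_mul]
      have := pi_gt_three
      linarith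
    have hzpow : (1 + ‖z‖) ^ (m + 1) ≤ (2 * π) ^ (m + 1) * (1 + ‖w‖) ^ (m + 1) := by
      rw [← mul_pow]
      exact pow_le_pow_left₀ (by positivity) hz1 _
    have hP : (0:ℝ) < (1 + ‖z‖) ^ (m + 1) := by positivity
    rw [← div_eq_mul_inv, le_div_iff₀ hP, stepA z]
    calc ‖𝓕 (fun ξ : 𝔼 => a (x, ξ)) w‖ * (1 + ‖z‖) ^ (m + 1)
        ≤ ‖𝓕 (fun ξ : 𝔼 => a (x, ξ)) w‖ * ((2 * π) ^ (m + 1) * (1 + ‖w‖) ^ (m + 1)) :=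
          mul_le_mul_of_nonneg_left hzpow (norm_nonneg _)
      _ = (2 * π) ^ (m + 1) * (‖𝓕 (fun ξ : 𝔼 => a (x, ξ)) w‖ * (1 + ‖w‖) ^ (m + 1)) := by ring
      _ ≤ (2 * π) ^ (m + 1) * (2 ^ (m + 1) * (1 + 2 ^ (m + 1)) * C) :=
          mul_le_mul_of_nonneg_left hkd (by positivity)
      _ = 2 ^ (m + 1) * (1 + 2 ^ (m + 1)) * (2 * π) ^ (m + 1) * C := by ring
  -- Step C : Fubini representation
  have hFcont : Continuous fun q : 𝔼 × 𝔼 =>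
      Complex.exp (Complex.I * ((inner ℝ x q.1 : ℝ) : ℂ)) * a (x, q.1) *
        (Complex.exp (-Complex.I * ((inner ℝ q.2 q.1 : ℝ) : ℂ)) * f q.2) := by
    have h1 : Continuous fun q : 𝔼 × 𝔼 => (inner ℝ x q.1 : ℝ) :=
      continuous_const.inner continuous_fst
    have h2 : Continuous fun q : 𝔼 × 𝔼 => (inner ℝ q.2 q.1 : ℝ) :=
      continuous_snd.inner continuous_fst
    exact ((Complex.continuous_exp.comp
        (continuous_const.mul (Complex.continuous_ofReal.comp h1))).mul
        (ha.comp (continuous_const.prodMk continuous_fst))).mul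
      ((Complex.continuous_exp.comp
        (continuous_const.mul (Complex.continuous_ofReal.comp h2))).mul
        (hfc.comp continuous_snd))
  have hFint : Integrable (Function.uncurry fun ξ y : 𝔼 =>
      Complex.exp (Complex.I * ((inner ℝ x ξ : ℝ) : ℂ)) * a (x, ξ) *
        (Complex.exp (-Complex.I * ((inner ℝ y ξ : ℝ) : ℂ)) * f y)) (volume.prod volume) := by
    refine Integrable.mono' ((hgint.norm).mul_prod (hfint.norm))
      hFcont.aestronglyMeasurable ?_
    refine Filter.Eventually.of_forall fun q => ?_
    obtain ⟨ξ, y⟩ := q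
    simp only [Function.uncurry_apply_pair, norm_mul, norm_exp_I_mul, norm_exp_neg_I_mul,
      one_mul, le_refl]
  have repr : symbOp a (⇑f) x = (((2 * π) ^ m)⁻¹ : ℝ) • ∫ y, J (x - y) * f y := by
    rw [symbOp]
    congr 1
    calc ∫ ξ : 𝔼, Complex.exp (Complex.I * ((inner ℝ x ξ : ℝ) : ℂ)) * a (x, ξ) * fourierInt (⇑f) ξ
        = ∫ ξ : 𝔼, ∫ y : 𝔼, Complex.exp (Complex.I * ((inner ℝ x ξ : ℝ) : ℂ)) * a (x, ξ) *
            (Complex.exp (-Complex.I * ((inner ℝ y ξ : ℝ) : ℂ)) * f y) := by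
          refine congrArg (integral volume) (funext fun ξ => ?_)
          rw [fourierInt, ← integral_const_mul]
      _ = ∫ y : 𝔼, ∫ ξ : 𝔼, Complex.exp (Complex.I * ((inner ℝ x ξ : ℝ) : ℂ)) * a (x, ξ) *
            (Complex.exp (-Complex.I * ((inner ℝ y ξ : ℝ) : ℂ)) * f y) :=
          integral_integral_swap hFint
      _ = ∫ y : 𝔼, J (x - y) * f y := by
          refine congrArg (integral volume) (funext fun y => ?_)
          have hJxy : J (x - y)
              = ∫ ξ : 𝔼, Complex.exp (Complex.I * ((inner ℝ (x - y) ξ : ℝ) : ℂ)) * a (x, ξ) := by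
            rw [hJdef]
          rw [hJxy, ← integral_mul_const]
          refine congrArg (integral volume) (funext fun ξ => ?_)
          have hxy : (inner ℝ (x - y) ξ : ℝ) = (inner ℝ x ξ : ℝ) - (inner ℝ y ξ : ℝ) :=
            inner_sub_left _ _ _
          have hexp : Complex.exp (Complex.I * ((inner ℝ (x - y) ξ : ℝ) : ℂ))
              = Complex.exp (Complex.I * ((inner ℝ x ξ : ℝ) : ℂ)) *
                Complex.exp (-Complex.I * ((inner ℝ y ξ : ℝ) : ℂ)) := by
            rw [← Complex.exp_add, hxy]
            congr 1
            push_cast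
            ring
          rw [hexp]
          ring
  rw [repr, ← integral_smul]
  refine le_trans (enorm_integral_le_lintegral_enorm _) (lintegral_mono fun y => ?_)
  rw [← ofReal_norm_eq_enorm]
  have hnorm : ‖(((2 * π) ^ m)⁻¹ : ℝ) • (J (x - y) * f y)‖
      = (((2 * π) ^ m)⁻¹ * ‖J (x - y)‖) * ‖f y‖ := by
    rw [norm_smul, Real.norm_eq_abs, abs_of_pos (by positivity), norm_mul, mul_assoc]
  rw [hnorm, ENNReal.ofReal_mul (by positivity), ofReal_norm_eq_enorm]
  refine mul_le_mul_left (ENNReal.ofReal_le_ofReal ?_) _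
  have hJb := stepB (x - y)
  have hb2 : ((2 * π) ^ m)⁻¹ * ‖J (x - y)‖ ≤
      ((2 * π) ^ m)⁻¹ * ((2 ^ (m + 1) * (1 + 2 ^ (m + 1))) * (2 * π) ^ (m + 1) * C *
        (((1 + ‖x - y‖) ^ (m + 1))⁻¹)) :=
    mul_le_mul_of_nonneg_left hJb (by positivity)
  refine hb2.trans (le_of_eq ?_)
  rw [c4]
  ring

end Statement8Aux

open Statement8Aux in
/-- `L^p`-boundedness of pseudo-differential operators with bounded rough
symbols supported in `{|ξ| ≤ 2}` (Lemma 2.2 of the paper). -/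
theorem statement8 (m : ℕ) (hm : 1 ≤ m) :
    ∃ K : ℝ, 0 < K ∧
      ∀ (p : ℝ≥0∞), 1 ≤ p →
      ∀ (C : ℝ) (a : EuclideanSpace ℝ (Fin m) × EuclideanSpace ℝ (Fin m) → ℂ),
        Continuous a →
        (∃ M : ℝ, ∀ z, ‖a z‖ ≤ M) →
        (∀ x ξ, 2 < ‖ξ‖ → a (x, ξ) = 0) →
        (∀ x, ContDiff ℝ (m + 1 : ℕ) fun ξ => a (x, ξ)) →
        (∀ x, (∑ k ∈ Finset.range (m + 2),
          ∫ ξ : EuclideanSpace ℝ (Fin m), ‖iteratedFDeriv ℝ k (fun ζ => a (x, ζ)) ξ‖) ≤ C) →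
        ∀ f : SchwartzMap (EuclideanSpace ℝ (Fin m)) ℂ,
          eLpNorm (symbOp a f) p volume ≤ ENNReal.ofReal (K * C) * eLpNorm f p volume := by
  have hinv_meas : Measurable fun z : EuclideanSpace ℝ (Fin m) =>
      ENNReal.ofReal (((1 + ‖z‖) ^ (m + 1))⁻¹) := by
    refine ENNReal.measurable_ofReal.comp (Continuous.measurable ?_)
    exact ((continuous_const.add continuous_norm).pow _).inv₀ fun z => pow_ne_zero _ (by positivity : (0:ℝ) < 1 + ‖z‖).ne'
  set Iν : ℝ≥0∞ := ∫⁻ z : EuclideanSpace ℝ (Fin m),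
      ENNReal.ofReal (((1 + ‖z‖) ^ (m + 1))⁻¹) with hIνdef
  have hIνfin : Iν ≠ ⊤ := by
    have hIfin : Integrable (fun z : EuclideanSpace ℝ (Fin m) =>
        (1 + ‖z‖) ^ (-((m : ℝ) + 1))) volume := by
      apply integrable_one_add_norm (μ := volume)
      rw [finrank_euclideanSpace_fin]
      exact lt_add_one (m : ℝ)
    have heq : ∀ z : EuclideanSpace ℝ (Fin m),
        ((1 + ‖z‖) ^ (m + 1))⁻¹ = (1 + ‖z‖) ^ (-((m : ℝ) + 1)) := by
      intro z
      rw [Real.rpow_neg (by positivity), ← Real.rpow_natCast (1 + ‖z‖) (m + 1)]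
      norm_num
    rw [hIνdef]
    simp_rw [heq]
    exact hIfin.lintegral_lt_top.ne
  refine ⟨c4 m * Iν.toReal + 1,
    add_pos_of_nonneg_of_pos (mul_nonneg (c4_pos m).le ENNReal.toReal_nonneg) one_pos, ?_⟩
  intro p hp C a ha _hbdd hs hd hC f
  have hC0 : 0 ≤ C := by
    refine le_trans (Finset.sum_nonneg fun n _ => ?_) (hC 0)
    exact integral_nonneg fun _ => norm_nonneg _
  set G : EuclideanSpace ℝ (Fin m) → ℝ≥0∞ :=
    fun z => ENNReal.ofReal (c4 m * C * (((1 + ‖z‖) ^ (m + 1))⁻¹)) with hGdef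
  have hGmeas : Measurable G := by
    rw [hGdef]
    refine ENNReal.measurable_ofReal.comp (Continuous.measurable ?_)
    exact continuous_const.mul
      (((continuous_const.add continuous_norm).pow _).inv₀ fun z => pow_ne_zero _ (by positivity : (0:ℝ) < 1 + ‖z‖).ne')
  have hbd : ∀ x, (‖symbOp a (⇑f) x‖₊ : ℝ≥0∞) ≤ ∫⁻ y, G (x - y) * ‖f y‖₊ :=
    fun x => symbOp_pointwise a ha hs hd hC f x
  have hmain := young_eLpNorm G hGmeas (symbOp a ⇑f) ⇑f f.continuous hbd p hp
  refine hmain.trans (mul_le_mul_left ?_ _)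
  have h1 : ∫⁻ z, G z = ENNReal.ofReal (c4 m * C) * Iν := by
    rw [hGdef, hIνdef]
    have : ∀ z : EuclideanSpace ℝ (Fin m),
        ENNReal.ofReal (c4 m * C * (((1 + ‖z‖) ^ (m + 1))⁻¹))
          = ENNReal.ofReal (c4 m * C) * ENNReal.ofReal (((1 + ‖z‖) ^ (m + 1))⁻¹) := by
      intro z
      rw [ENNReal.ofReal_mul (mul_nonneg (c4_pos m).le hC0)]
    simp_rw [this]
    exact lintegral_const_mul _ hinv_meas
  rw [h1]
  calc ENNReal.ofReal (c4 m * C) * Iν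
      = ENNReal.ofReal (c4 m * C) * ENNReal.ofReal Iν.toReal := by
        rw [ENNReal.ofReal_toReal hIνfin]
    _ = ENNReal.ofReal (c4 m * C * Iν.toReal) := by
        rw [← ENNReal.ofReal_mul (mul_nonneg (c4_pos m).le hC0)]
    _ ≤ ENNReal.ofReal ((c4 m * Iν.toReal + 1) * C) := by
        refine ENNReal.ofReal_le_ofReal ?_
        nlinarith [ENNReal.toReal_nonneg (a := Iν), (c4_pos m).le, hC0]
end

section
/- Let ε_{ij} : ℝ × ℝ² → ℝ (i, j ∈ {1,2}) be C¹ functions with ε_{12} = ε_{21} (the entries of ε⁻¹), and let D : ℝ × ℝ² → ℝ², H : ℝ × ℝ² → ℝ be C¹ solutions of the two-dimensional Maxwell system ∂_t D = ∇_⊥ H, ∂_t H = −(∂_1 E2 − ∂_2 E1) with E_i = ε_{i1} D1 + ε_{i2} D2, such that there is R > 0 with D(t, x) = 0 and H(t, x) = 0 for all t ∈ [0, T] and |x| ≥ R. Then the energy E(t) = ∫_{ℝ²} (ε_{11} D1² + 2 ε_{12} D1 D2 + ε_{22} D2² + H²)(t, x) dx is differentiable on (0, T) with E′(t) = ∫_{ℝ²}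 (∂_t ε_{11} · D1² + 2 ∂_t ε_{12} · D1 D2 + ∂_t ε_{22} · D2²)(t, x) dx. -/
open MeasureTheory

/-- Partial derivative of `f : ℝⁿ → ℝ` in the `i`-th coordinate direction. -/
noncomputable def pd {n : ℕ} (i : Fin n) (f : (Fin n → ℝ) → ℝ) (x : Fin n → ℝ) : ℝ :=
  fderiv ℝ f x (Pi.single i 1)

lemma pd_cont {n : ℕ} (i : Fin n) {f : (Fin n → ℝ) → ℝ} (hf : ContDiff ℝ 1 f) :
    Continuous (pd i f) :=
  (hf.continuous_fderiv one_ne_zero).clm_apply continuous_const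

lemma hasDerivAt_timeCurve (x0 x1 t : ℝ) :
    HasDerivAt (fun τ : ℝ => (![τ, x0, x1] : Fin 3 → ℝ)) (Pi.single 0 1) t := by
  rw [hasDerivAt_pi]
  intro i
  fin_cases i
  · simp; exact hasDerivAt_id' t
  · simpa using hasDerivAt_const t x0
  · simpa using hasDerivAt_const t x1

lemma hasDerivAt_comp_time (f : (Fin 3 → ℝ) → ℝ) (hf : ContDiff ℝ 1 f) (x0 x1 t : ℝ) :
    HasDerivAt (fun τ => f ![τ, x0, x1]) (pd 0 f ![t, x0, x1]) t :=
  ((hf.differentiable one_ne_zero) _).hasFDerivAt.comp_hasDerivAt t (hasDerivAt_timeCurve x0 x1 t)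

lemma hasLineDerivAt_slice1 (f : (Fin 3 → ℝ) → ℝ) (hf : ContDiff ℝ 1 f) (t : ℝ)
    (x : Fin 2 → ℝ) :
    HasLineDerivAt ℝ (fun y : Fin 2 → ℝ => f ![t, y 0, y 1]) (pd 1 f ![t, x 0, x 1]) x
      (Pi.single 0 1) := by
  have hc : HasDerivAt
      (fun s : ℝ => (![t, (x + s • (Pi.single 0 1 : Fin 2 → ℝ)) 0,
        (x + s • (Pi.single 0 1 : Fin 2 → ℝ)) 1] : Fin 3 → ℝ)) (Pi.single 1 1) 0 := by
    rw [hasDerivAt_pi]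
    intro i
    fin_cases i
    · simpa using hasDerivAt_const (0:ℝ) t
    · simpa using (hasDerivAt_id (0:ℝ)).const_add (x 0)
    · simpa using hasDerivAt_const (0:ℝ) (x 1)
  have := ((hf.differentiable one_ne_zero) _).hasFDerivAt.comp_hasDerivAt 0 hc
  simpa [HasLineDerivAt, pd, Function.comp_def] using this

lemma hasLineDerivAt_slice2 (f : (Fin 3 → ℝ) → ℝ) (hf : ContDiff ℝ 1 f) (t : ℝ)
    (x : Fin 2 → ℝ) :
    HasLineDerivAt ℝ (fun y : Fin 2 → ℝ => f ![t, y 0, y 1]) (pd 2 f ![t, x 0, x 1]) x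
      (Pi.single 1 1) := by
  have hc : HasDerivAt
      (fun s : ℝ => (![t, (x + s • (Pi.single 1 1 : Fin 2 → ℝ)) 0,
        (x + s • (Pi.single 1 1 : Fin 2 → ℝ)) 1] : Fin 3 → ℝ)) (Pi.single 2 1) 0 := by
    rw [hasDerivAt_pi]
    intro i
    fin_cases i
    · simpa using hasDerivAt_const (0:ℝ) t
    · simpa using hasDerivAt_const (0:ℝ) (x 0)
    · simpa using (hasDerivAt_id (0:ℝ)).const_add (x 1)
  have := ((hf.differentiable one_ne_zero) _).hasFDerivAt.comp_hasDerivAt 0 hc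
  simpa [HasLineDerivAt, pd, Function.comp_def] using this

lemma norm_le_sqrt (x : Fin 2 → ℝ) : ‖x‖ ≤ Real.sqrt ((x 0) ^ 2 + (x 1) ^ 2) := by
  apply pi_norm_le_iff_of_nonneg (Real.sqrt_nonneg _) |>.2
  intro i
  rw [Real.norm_eq_abs, ← Real.sqrt_sq_eq_abs]
  fin_cases i
  · show Real.sqrt ((x 0) ^ 2) ≤ _
    exact Real.sqrt_le_sqrt (by nlinarith [sq_nonneg (x 1)])
  · show Real.sqrt ((x 1) ^ 2) ≤ _
    exact Real.sqrt_le_sqrt (by nlinarith [sq_nonneg (x 0)])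

lemma hcs_of_vanish {R : ℝ} (g : (Fin 2 → ℝ) → ℝ)
    (hg : ∀ x : Fin 2 → ℝ, R < Real.sqrt ((x 0) ^ 2 + (x 1) ^ 2) → g x = 0) :
    HasCompactSupport g := by
  apply HasCompactSupport.intro (isCompact_closedBall (0 : Fin 2 → ℝ) R)
  intro x hx
  apply hg
  have : R < ‖x‖ := by
    simp only [Metric.mem_closedBall, dist_zero_right, not_le] at hx
    exact hx
  exact lt_of_lt_of_le this (norm_le_sqrt x)

lemma integrable_of_vanish {R : ℝ} (g : (Fin 2 → ℝ) → ℝ) (hc : Continuous g)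
    (hg : ∀ x : Fin 2 → ℝ, R < Real.sqrt ((x 0) ^ 2 + (x 1) ^ 2) → g x = 0) :
    Integrable g := hc.integrable_of_hasCompactSupport (hcs_of_vanish g hg)

lemma vec_eta3 (w : Fin 3 → ℝ) : ![w 0, w 1, w 2] = w := by
  funext i; fin_cases i <;> rfl

lemma pd_vanish {T R : ℝ} (f : (Fin 3 → ℝ) → ℝ)
    (hv : ∀ w : Fin 3 → ℝ, w 0 ∈ Set.Icc 0 T →
      R ≤ Real.sqrt ((w 1) ^ 2 + (w 2) ^ 2) → f w = 0)
    (i : Fin 3) (w : Fin 3 → ℝ) (hw0 : w 0 ∈ Set.Ioo 0 T)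
    (hw : R < Real.sqrt ((w 1) ^ 2 + (w 2) ^ 2)) : pd i f w = 0 := by
  have hU : IsOpen {u : Fin 3 → ℝ | u 0 ∈ Set.Ioo 0 T ∧
      R < Real.sqrt ((u 1) ^ 2 + (u 2) ^ 2)} := by
    apply IsOpen.inter
    · exact isOpen_Ioo.preimage (continuous_apply 0)
    · exact isOpen_lt continuous_const (Real.continuous_sqrt.comp (by continuity))
  have hev : f =ᶠ[nhds w] (fun _ => (0:ℝ)) := by
    filter_upwards [hU.mem_nhds ⟨hw0, hw⟩] with u hu
    exact hv u (Set.mem_Icc_of_Ioo hu.1) hu.2.le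
  have : fderiv ℝ f w = fderiv ℝ (fun _ => (0:ℝ)) w := hev.fderiv_eq
  simp only [pd, this, fderiv_const]
  simp

/-- energy identity for compactly supported solutions of the 2d
Maxwell system. -/
theorem statement12
    (ε11 ε12 ε21 ε22 : (Fin 3 → ℝ) → ℝ)
    (hε11 : ContDiff ℝ 1 ε11) (hε12 : ContDiff ℝ 1 ε12)
    (hε21 : ContDiff ℝ 1 ε21) (hε22 : ContDiff ℝ 1 ε22)
    (hsym : ε12 = ε21)
    (D1 D2 H : (Fin 3 → ℝ) → ℝ)
    (hD1 : ContDiff ℝ 1 D1) (hD2 : ContDiff ℝ 1 D2) (hH : ContDiff ℝ 1 H)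
    (E1 E2 : (Fin 3 → ℝ) → ℝ)
    (hE1 : ∀ w, E1 w = ε11 w * D1 w + ε12 w * D2 w)
    (hE2 : ∀ w, E2 w = ε21 w * D1 w + ε22 w * D2 w)
    (maxwell1 : ∀ w, pd 0 D1 w = pd 2 H w)
    (maxwell2 : ∀ w, pd 0 D2 w = -(pd 1 H w))
    (maxwell3 : ∀ w, pd 0 H w = -(pd 1 E2 w - pd 2 E1 w))
    (T R : ℝ) (hR : 0 < R)
    (hsupp : ∀ t ∈ Set.Icc (0 : ℝ) T, ∀ x : Fin 2 → ℝ,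
      R ≤ Real.sqrt ((x 0) ^ 2 + (x 1) ^ 2) →
      D1 ![t, x 0, x 1] = 0 ∧ D2 ![t, x 0, x 1] = 0 ∧ H ![t, x 0, x 1] = 0) :
    ∀ t ∈ Set.Ioo (0 : ℝ) T,
      HasDerivAt
        (fun τ : ℝ => ∫ x : Fin 2 → ℝ,
          (ε11 ![τ, x 0, x 1] * (D1 ![τ, x 0, x 1]) ^ 2
            + 2 * ε12 ![τ, x 0, x 1] * D1 ![τ, x 0, x 1] * D2 ![τ, x 0, x 1]
            + ε22 ![τ, x 0, x 1] * (D2 ![τ, x 0, x 1]) ^ 2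
            + (H ![τ, x 0, x 1]) ^ 2))
        (∫ x : Fin 2 → ℝ,
          (pd 0 ε11 ![t, x 0, x 1] * (D1 ![t, x 0, x 1]) ^ 2
            + 2 * pd 0 ε12 ![t, x 0, x 1] * D1 ![t, x 0, x 1] * D2 ![t, x 0, x 1]
            + pd 0 ε22 ![t, x 0, x 1] * (D2 ![t, x 0, x 1]) ^ 2))
        t := by
  intro t ht
  obtain ⟨ht0, htT⟩ := ht
  -- smoothness of E1, E2
  have hE1c : ContDiff ℝ 1 E1 := by
    have : E1 = fun w => ε11 w * D1 w + ε12 w * D2 w := funext hE1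
    rw [this]; exact (hε11.mul hD1).add (hε12.mul hD2)
  have hE2c : ContDiff ℝ 1 E2 := by
    have : E2 = fun w => ε21 w * D1 w + ε22 w * D2 w := funext hE2
    rw [this]; exact (hε21.mul hD1).add (hε22.mul hD2)
  -- vanishing of fields outside the ball
  have hvD1 : ∀ w : Fin 3 → ℝ, w 0 ∈ Set.Icc 0 T →
      R ≤ Real.sqrt ((w 1) ^ 2 + (w 2) ^ 2) → D1 w = 0 := by
    intro w h0 h1
    have h2 : R ≤ Real.sqrt ((![w 1, w 2] : Fin 2 → ℝ) 0 ^ 2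
        + (![w 1, w 2] : Fin 2 → ℝ) 1 ^ 2) := by simpa using h1
    have := (hsupp (w 0) h0 ![w 1, w 2] h2).1
    simpa [vec_eta3 w] using this
  have hvD2 : ∀ w : Fin 3 → ℝ, w 0 ∈ Set.Icc 0 T →
      R ≤ Real.sqrt ((w 1) ^ 2 + (w 2) ^ 2) → D2 w = 0 := by
    intro w h0 h1
    have h2 : R ≤ Real.sqrt ((![w 1, w 2] : Fin 2 → ℝ) 0 ^ 2
        + (![w 1, w 2] : Fin 2 → ℝ) 1 ^ 2) := by simpa using h1
    have := (hsupp (w 0) h0 ![w 1, w 2] h2).2.1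
    simpa [vec_eta3 w] using this
  have hvH : ∀ w : Fin 3 → ℝ, w 0 ∈ Set.Icc 0 T →
      R ≤ Real.sqrt ((w 1) ^ 2 + (w 2) ^ 2) → H w = 0 := by
    intro w h0 h1
    have h2 : R ≤ Real.sqrt ((![w 1, w 2] : Fin 2 → ℝ) 0 ^ 2
        + (![w 1, w 2] : Fin 2 → ℝ) 1 ^ 2) := by simpa using h1
    have := (hsupp (w 0) h0 ![w 1, w 2] h2).2.2
    simpa [vec_eta3 w] using this
  have hvE1 : ∀ w : Fin 3 → ℝ, w 0 ∈ Set.Icc 0 T →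
      R ≤ Real.sqrt ((w 1) ^ 2 + (w 2) ^ 2) → E1 w = 0 := by
    intro w h0 h1
    rw [hE1 w, hvD1 w h0 h1, hvD2 w h0 h1]; ring
  have hvE2 : ∀ w : Fin 3 → ℝ, w 0 ∈ Set.Icc 0 T →
      R ≤ Real.sqrt ((w 1) ^ 2 + (w 2) ^ 2) → E2 w = 0 := by
    intro w h0 h1
    rw [hE2 w, hvD1 w h0 h1, hvD2 w h0 h1]; ring
  -- membership of t
  have htIcc : t ∈ Set.Icc (0:ℝ) T := ⟨ht0.le, htT.le⟩
  have htIoo : t ∈ Set.Ioo (0:ℝ) T := ⟨ht0, htT⟩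
  -- the curve map and continuity
  have hcurve : Continuous (fun p : ℝ × (Fin 2 → ℝ) => (![p.1, p.2 0, p.2 1] : Fin 3 → ℝ)) := by
    refine continuous_pi fun i => ?_
    fin_cases i
    · simpa using continuous_fst
    · simp; exact (continuous_apply (0 : Fin 2)).comp continuous_snd
    · simp; exact (continuous_apply (1 : Fin 2)).comp continuous_snd
  have hslice : ∀ (τ : ℝ), Continuous (fun x : Fin 2 → ℝ => (![τ, x 0, x 1] : Fin 3 → ℝ)) :=
    fun τ => hcurve.comp (continuous_const.prodMk continuous_id)
  -- continuity of the integrands on ℝ³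
  have hQ3 : Continuous (fun w : Fin 3 → ℝ => ε11 w * D1 w ^ 2 + 2 * ε12 w * D1 w * D2 w
      + ε22 w * D2 w ^ 2 + H w ^ 2) := by
    have c1 := hε11.continuous; have c2 := hε12.continuous; have c3 := hε22.continuous
    have c4 := hD1.continuous; have c5 := hD2.continuous; have c6 := hH.continuous
    fun_prop
  have hΦ3 : Continuous (fun w : Fin 3 → ℝ =>
      pd 0 ε11 w * D1 w ^ 2 + 2 * pd 0 ε12 w * D1 w * D2 w + pd 0 ε22 w * D2 w ^ 2
        + 2 * E1 w * pd 0 D1 w + 2 * E2 w * pd 0 D2 w + 2 * H w * pd 0 H w) := by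
    have c1 := pd_cont 0 hε11; have c2 := pd_cont 0 hε12; have c3 := pd_cont 0 hε22
    have c4 := hD1.continuous; have c5 := hD2.continuous; have c6 := hH.continuous
    have c7 := hE1c.continuous; have c8 := hE2c.continuous
    have c9 := pd_cont 0 hD1; have c10 := pd_cont 0 hD2; have c11 := pd_cont 0 hH
    fun_prop
  -- the parameter for the dominated convergence argument
  set δ : ℝ := min t (T - t) with hδdef
  have hδ : 0 < δ := lt_min ht0 (by linarith)
  have hballI : Metric.ball t δ ⊆ Set.Ioo 0 T := by
    intro τ hτ
    rw [Metric.mem_ball, Real.dist_eq] at hτ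
    obtain ⟨h1, h2⟩ := abs_lt.1 hτ
    have := min_le_left t (T - t); have := min_le_right t (T - t)
    constructor <;> [linarith; linarith]
  -- bound on the compact set
  obtain ⟨C, hC⟩ := (IsCompact.prod isCompact_Icc
      (isCompact_closedBall (0 : Fin 2 → ℝ) R) :
      IsCompact (Set.Icc (t - δ) (t + δ) ×ˢ Metric.closedBall (0 : Fin 2 → ℝ) R)
      ).exists_bound_of_continuousOn (hΦ3.comp hcurve).continuousOn
  -- zero value of the derivative integrand away from the support
  have hΦzero : ∀ τ ∈ Set.Icc (0:ℝ) T, ∀ x : Fin 2 → ℝ,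
      R ≤ Real.sqrt ((x 0) ^ 2 + (x 1) ^ 2) →
      pd 0 ε11 ![τ, x 0, x 1] * D1 ![τ, x 0, x 1] ^ 2
        + 2 * pd 0 ε12 ![τ, x 0, x 1] * D1 ![τ, x 0, x 1] * D2 ![τ, x 0, x 1]
        + pd 0 ε22 ![τ, x 0, x 1] * D2 ![τ, x 0, x 1] ^ 2
        + 2 * E1 ![τ, x 0, x 1] * pd 0 D1 ![τ, x 0, x 1]
        + 2 * E2 ![τ, x 0, x 1] * pd 0 D2 ![τ, x 0, x 1]
        + 2 * H ![τ, x 0, x 1] * pd 0 H ![τ, x 0, x 1] = 0 := by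
    intro τ hτ x hx
    have h0 : (![τ, x 0, x 1] : Fin 3 → ℝ) 0 ∈ Set.Icc (0:ℝ) T := by simpa using hτ
    have h1 : R ≤ Real.sqrt (((![τ, x 0, x 1] : Fin 3 → ℝ) 1) ^ 2
        + ((![τ, x 0, x 1] : Fin 3 → ℝ) 2) ^ 2) := by simpa using hx
    rw [hvD1 _ h0 h1, hvD2 _ h0 h1, hvH _ h0 h1, hvE1 _ h0 h1, hvE2 _ h0 h1]
    ring
  -- zero value of the energy integrand away from the support
  have hQzero : ∀ τ ∈ Set.Icc (0:ℝ) T, ∀ x : Fin 2 → ℝ,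
      R ≤ Real.sqrt ((x 0) ^ 2 + (x 1) ^ 2) →
      ε11 ![τ, x 0, x 1] * (D1 ![τ, x 0, x 1]) ^ 2
        + 2 * ε12 ![τ, x 0, x 1] * D1 ![τ, x 0, x 1] * D2 ![τ, x 0, x 1]
        + ε22 ![τ, x 0, x 1] * (D2 ![τ, x 0, x 1]) ^ 2
        + (H ![τ, x 0, x 1]) ^ 2 = 0 := by
    intro τ hτ x hx
    have h0 : (![τ, x 0, x 1] : Fin 3 → ℝ) 0 ∈ Set.Icc (0:ℝ) T := by simpa using hτ
    have h1 : R ≤ Real.sqrt (((![τ, x 0, x 1] : Fin 3 → ℝ) 1) ^ 2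
        + ((![τ, x 0, x 1] : Fin 3 → ℝ) 2) ^ 2) := by simpa using hx
    rw [hvD1 _ h0 h1, hvD2 _ h0 h1, hvH _ h0 h1]
    ring
  -- differentiation under the integral sign
  have hder : HasDerivAt
      (fun τ : ℝ => ∫ x : Fin 2 → ℝ,
        (ε11 ![τ, x 0, x 1] * (D1 ![τ, x 0, x 1]) ^ 2
          + 2 * ε12 ![τ, x 0, x 1] * D1 ![τ, x 0, x 1] * D2 ![τ, x 0, x 1]
          + ε22 ![τ, x 0, x 1] * (D2 ![τ, x 0, x 1]) ^ 2
          + (H ![τ, x 0, x 1]) ^ 2))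
      (∫ x : Fin 2 → ℝ,
        (pd 0 ε11 ![t, x 0, x 1] * D1 ![t, x 0, x 1] ^ 2
          + 2 * pd 0 ε12 ![t, x 0, x 1] * D1 ![t, x 0, x 1] * D2 ![t, x 0, x 1]
          + pd 0 ε22 ![t, x 0, x 1] * D2 ![t, x 0, x 1] ^ 2
          + 2 * E1 ![t, x 0, x 1] * pd 0 D1 ![t, x 0, x 1]
          + 2 * E2 ![t, x 0, x 1] * pd 0 D2 ![t, x 0, x 1]
          + 2 * H ![t, x 0, x 1] * pd 0 H ![t, x 0, x 1])) t := by
    refine (hasDerivAt_integral_of_dominated_loc_of_deriv_le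
      (F' := fun (τ : ℝ) (x : Fin 2 → ℝ) =>
        pd 0 ε11 ![τ, x 0, x 1] * D1 ![τ, x 0, x 1] ^ 2
          + 2 * pd 0 ε12 ![τ, x 0, x 1] * D1 ![τ, x 0, x 1] * D2 ![τ, x 0, x 1]
          + pd 0 ε22 ![τ, x 0, x 1] * D2 ![τ, x 0, x 1] ^ 2
          + 2 * E1 ![τ, x 0, x 1] * pd 0 D1 ![τ, x 0, x 1]
          + 2 * E2 ![τ, x 0, x 1] * pd 0 D2 ![τ, x 0, x 1]
          + 2 * H ![τ, x 0, x 1] * pd 0 H ![τ, x 0, x 1])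
      (bound := (Metric.closedBall (0 : Fin 2 → ℝ) R).indicator fun _ => C)
      (Metric.ball_mem_nhds t hδ) ?_ ?_ ?_ ?_ ?_ ?_).2
    · exact Filter.Eventually.of_forall fun τ =>
        ((hQ3.comp (hslice τ)).aestronglyMeasurable)
    · refine integrable_of_vanish (R := R) _ (hQ3.comp (hslice t)) fun x hx => ?_
      exact hQzero t htIcc x hx.le
    · exact (hΦ3.comp (hslice t)).aestronglyMeasurable
    · refine Filter.Eventually.of_forall fun x => fun τ hτ => ?_
      by_cases hx : x ∈ Metric.closedBall (0 : Fin 2 → ℝ) R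
      · rw [Set.indicator_of_mem hx]
        have hmem : ((τ, x) : ℝ × (Fin 2 → ℝ)) ∈
            Set.Icc (t - δ) (t + δ) ×ˢ Metric.closedBall (0 : Fin 2 → ℝ) R := by
          refine ⟨?_, hx⟩
          rw [Metric.mem_ball, Real.dist_eq] at hτ
          obtain ⟨h1, h2⟩ := abs_lt.1 hτ
          exact ⟨by linarith, by linarith⟩
        exact hC (τ, x) hmem
      · rw [Set.indicator_of_notMem hx]
        have hIoo := hballI hτ
        have hnx : R < ‖x‖ := by
          simpa [Metric.mem_closedBall, dist_zero_right, not_le] using hx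
        have hsq : R ≤ Real.sqrt ((x 0) ^ 2 + (x 1) ^ 2) :=
          (lt_of_lt_of_le hnx (norm_le_sqrt x)).le
        show ‖pd 0 ε11 ![τ, x 0, x 1] * D1 ![τ, x 0, x 1] ^ 2
          + 2 * pd 0 ε12 ![τ, x 0, x 1] * D1 ![τ, x 0, x 1] * D2 ![τ, x 0, x 1]
          + pd 0 ε22 ![τ, x 0, x 1] * D2 ![τ, x 0, x 1] ^ 2
          + 2 * E1 ![τ, x 0, x 1] * pd 0 D1 ![τ, x 0, x 1]
          + 2 * E2 ![τ, x 0, x 1] * pd 0 D2 ![τ, x 0, x 1]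
          + 2 * H ![τ, x 0, x 1] * pd 0 H ![τ, x 0, x 1]‖ ≤ 0
        rw [hΦzero τ (Set.mem_Icc_of_Ioo hIoo) x hsq]
        simp
    · exact (integrable_indicator_iff measurableSet_closedBall).2
        (integrableOn_const measure_closedBall_lt_top.ne)
    · refine Filter.Eventually.of_forall fun x => fun τ hτ => ?_
      have h11 := hasDerivAt_comp_time ε11 hε11 (x 0) (x 1) τ
      have h12 := hasDerivAt_comp_time ε12 hε12 (x 0) (x 1) τ
      have h22 := hasDerivAt_comp_time ε22 hε22 (x 0) (x 1) τ
      have hd1 := hasDerivAt_comp_time D1 hD1 (x 0) (x 1) τ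
      have hd2 := hasDerivAt_comp_time D2 hD2 (x 0) (x 1) τ
      have hh := hasDerivAt_comp_time H hH (x 0) (x 1) τ
      have big := (((h11.mul (hd1.pow 2)).add
        (((h12.const_mul 2).mul hd1).mul hd2)).add (h22.mul (hd2.pow 2))).add (hh.pow 2)
      convert big using 1
      · funext y; simp only [Pi.mul_apply, Pi.pow_apply, Pi.add_apply]
      simp only [hE1, hE2, hsym, Pi.mul_apply, Pi.pow_apply]
      norm_num
      ring
  -- integrability of the various pieces at time t
  have hiPsi : Integrable (fun x : Fin 2 → ℝ =>
      pd 0 ε11 ![t, x 0, x 1] * (D1 ![t, x 0, x 1]) ^ 2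
        + 2 * pd 0 ε12 ![t, x 0, x 1] * D1 ![t, x 0, x 1] * D2 ![t, x 0, x 1]
        + pd 0 ε22 ![t, x 0, x 1] * (D2 ![t, x 0, x 1]) ^ 2) := by
    refine integrable_of_vanish (R := R) _ ?_ fun x hx => ?_
    · have c1 := pd_cont 0 hε11; have c2 := pd_cont 0 hε12; have c3 := pd_cont 0 hε22
      have c4 := hD1.continuous; have c5 := hD2.continuous
      have hs := hslice t
      fun_prop
    · have h0 : (![t, x 0, x 1] : Fin 3 → ℝ) 0 ∈ Set.Icc (0:ℝ) T := by simpa using htIcc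
      have h1 : R ≤ Real.sqrt (((![t, x 0, x 1] : Fin 3 → ℝ) 1) ^ 2
          + ((![t, x 0, x 1] : Fin 3 → ℝ) 2) ^ 2) := by simpa using hx.le
      rw [hvD1 _ h0 h1, hvD2 _ h0 h1]
      ring
  have hmem3 : ∀ x : Fin 2 → ℝ, R < Real.sqrt ((x 0) ^ 2 + (x 1) ^ 2) →
      ((![t, x 0, x 1] : Fin 3 → ℝ) 0 ∈ Set.Icc (0:ℝ) T ∧
        R ≤ Real.sqrt (((![t, x 0, x 1] : Fin 3 → ℝ) 1) ^ 2
          + ((![t, x 0, x 1] : Fin 3 → ℝ) 2) ^ 2)) := by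
    intro x hx
    exact ⟨by simpa using htIcc, by simpa using hx.le⟩
  have hiA : Integrable (fun x : Fin 2 → ℝ => E1 ![t, x 0, x 1] * pd 2 H ![t, x 0, x 1]) := by
    refine integrable_of_vanish (R := R) _ ?_ fun x hx => ?_
    · have c1 := hE1c.continuous; have c2 := pd_cont 2 hH
      have hs := hslice t
      fun_prop
    · rw [hvE1 _ (hmem3 x hx).1 (hmem3 x hx).2, zero_mul]
  have hiB : Integrable (fun x : Fin 2 → ℝ => pd 2 E1 ![t, x 0, x 1] * H ![t, x 0, x 1]) := by
    refine integrable_of_vanish (R := R) _ ?_ fun x hx => ?_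
    · have c1 := pd_cont 2 hE1c; have c2 := hH.continuous
      have hs := hslice t
      fun_prop
    · rw [hvH _ (hmem3 x hx).1 (hmem3 x hx).2, mul_zero]
  have hiC : Integrable (fun x : Fin 2 → ℝ => E2 ![t, x 0, x 1] * pd 1 H ![t, x 0, x 1]) := by
    refine integrable_of_vanish (R := R) _ ?_ fun x hx => ?_
    · have c1 := hE2c.continuous; have c2 := pd_cont 1 hH
      have hs := hslice t
      fun_prop
    · rw [hvE2 _ (hmem3 x hx).1 (hmem3 x hx).2, zero_mul]
  have hiD : Integrable (fun x : Fin 2 → ℝ => pd 1 E2 ![t, x 0, x 1] * H ![t, x 0, x 1]) := by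
    refine integrable_of_vanish (R := R) _ ?_ fun x hx => ?_
    · have c1 := pd_cont 1 hE2c; have c2 := hH.continuous
      have hs := hslice t
      fun_prop
    · rw [hvH _ (hmem3 x hx).1 (hmem3 x hx).2, mul_zero]
  have hiE1H : Integrable (fun x : Fin 2 → ℝ => E1 ![t, x 0, x 1] * H ![t, x 0, x 1]) := by
    refine integrable_of_vanish (R := R) _ ?_ fun x hx => ?_
    · have c1 := hE1c.continuous; have c2 := hH.continuous
      have hs := hslice t
      fun_prop
    · rw [hvH _ (hmem3 x hx).1 (hmem3 x hx).2, mul_zero]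
  have hiE2H : Integrable (fun x : Fin 2 → ℝ => E2 ![t, x 0, x 1] * H ![t, x 0, x 1]) := by
    refine integrable_of_vanish (R := R) _ ?_ fun x hx => ?_
    · have c1 := hE2c.continuous; have c2 := hH.continuous
      have hs := hslice t
      fun_prop
    · rw [hvH _ (hmem3 x hx).1 (hmem3 x hx).2, mul_zero]
  -- integration by parts in the two spatial directions
  have hibp1 : ∫ x : Fin 2 → ℝ, E1 ![t, x 0, x 1] * pd 2 H ![t, x 0, x 1]
      = - ∫ x : Fin 2 → ℝ, pd 2 E1 ![t, x 0, x 1] * H ![t, x 0, x 1] := by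
    have := integral_bilinear_hasLineDerivAt_right_eq_neg_left_of_integrable
      (μ := (volume : Measure (Fin 2 → ℝ))) (B := ContinuousLinearMap.mul ℝ ℝ)
      (f := fun x : Fin 2 → ℝ => E1 ![t, x 0, x 1])
      (f' := fun x : Fin 2 → ℝ => pd 2 E1 ![t, x 0, x 1])
      (g := fun x : Fin 2 → ℝ => H ![t, x 0, x 1])
      (g' := fun x : Fin 2 → ℝ => pd 2 H ![t, x 0, x 1])
      (v := Pi.single 1 1)
      (by simpa using hiB) (by simpa using hiA) (by simpa using hiE1H)
      (fun x _ => hasLineDerivAt_slice2 E1 hE1c t x)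
      (fun x _ => hasLineDerivAt_slice2 H hH t x)
    simpa using this
  have hibp2 : ∫ x : Fin 2 → ℝ, E2 ![t, x 0, x 1] * pd 1 H ![t, x 0, x 1]
      = - ∫ x : Fin 2 → ℝ, pd 1 E2 ![t, x 0, x 1] * H ![t, x 0, x 1] := by
    have := integral_bilinear_hasLineDerivAt_right_eq_neg_left_of_integrable
      (μ := (volume : Measure (Fin 2 → ℝ))) (B := ContinuousLinearMap.mul ℝ ℝ)
      (f := fun x : Fin 2 → ℝ => E2 ![t, x 0, x 1])
      (f' := fun x : Fin 2 → ℝ => pd 1 E2 ![t, x 0, x 1])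
      (g := fun x : Fin 2 → ℝ => H ![t, x 0, x 1])
      (g' := fun x : Fin 2 → ℝ => pd 1 H ![t, x 0, x 1])
      (v := Pi.single 0 1)
      (by simpa using hiD) (by simpa using hiC) (by simpa using hiE2H)
      (fun x _ => hasLineDerivAt_slice1 E2 hE2c t x)
      (fun x _ => hasLineDerivAt_slice1 H hH t x)
    simpa using this
  -- the key integral identity
  have key : (∫ x : Fin 2 → ℝ,
      (pd 0 ε11 ![t, x 0, x 1] * D1 ![t, x 0, x 1] ^ 2
        + 2 * pd 0 ε12 ![t, x 0, x 1] * D1 ![t, x 0, x 1] * D2 ![t, x 0, x 1]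
        + pd 0 ε22 ![t, x 0, x 1] * D2 ![t, x 0, x 1] ^ 2
        + 2 * E1 ![t, x 0, x 1] * pd 0 D1 ![t, x 0, x 1]
        + 2 * E2 ![t, x 0, x 1] * pd 0 D2 ![t, x 0, x 1]
        + 2 * H ![t, x 0, x 1] * pd 0 H ![t, x 0, x 1]))
      = ∫ x : Fin 2 → ℝ,
      (pd 0 ε11 ![t, x 0, x 1] * (D1 ![t, x 0, x 1]) ^ 2
        + 2 * pd 0 ε12 ![t, x 0, x 1] * D1 ![t, x 0, x 1] * D2 ![t, x 0, x 1]
        + pd 0 ε22 ![t, x 0, x 1] * (D2 ![t, x 0, x 1]) ^ 2) := by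
    have hfun : ∀ x : Fin 2 → ℝ,
        pd 0 ε11 ![t, x 0, x 1] * D1 ![t, x 0, x 1] ^ 2
          + 2 * pd 0 ε12 ![t, x 0, x 1] * D1 ![t, x 0, x 1] * D2 ![t, x 0, x 1]
          + pd 0 ε22 ![t, x 0, x 1] * D2 ![t, x 0, x 1] ^ 2
          + 2 * E1 ![t, x 0, x 1] * pd 0 D1 ![t, x 0, x 1]
          + 2 * E2 ![t, x 0, x 1] * pd 0 D2 ![t, x 0, x 1]
          + 2 * H ![t, x 0, x 1] * pd 0 H ![t, x 0, x 1]
        = (pd 0 ε11 ![t, x 0, x 1] * (D1 ![t, x 0, x 1]) ^ 2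
          + 2 * pd 0 ε12 ![t, x 0, x 1] * D1 ![t, x 0, x 1] * D2 ![t, x 0, x 1]
          + pd 0 ε22 ![t, x 0, x 1] * (D2 ![t, x 0, x 1]) ^ 2)
          + 2 * (E1 ![t, x 0, x 1] * pd 2 H ![t, x 0, x 1])
          + 2 * (pd 2 E1 ![t, x 0, x 1] * H ![t, x 0, x 1])
          - 2 * (E2 ![t, x 0, x 1] * pd 1 H ![t, x 0, x 1])
          - 2 * (pd 1 E2 ![t, x 0, x 1] * H ![t, x 0, x 1]) := by
      intro x
      rw [maxwell1, maxwell2, maxwell3]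
      ring
    have hiA2 : Integrable (fun x : Fin 2 → ℝ =>
        2 * (E1 ![t, x 0, x 1] * pd 2 H ![t, x 0, x 1])) volume := hiA.const_mul 2
    have hiB2 : Integrable (fun x : Fin 2 → ℝ =>
        2 * (pd 2 E1 ![t, x 0, x 1] * H ![t, x 0, x 1])) volume := hiB.const_mul 2
    have hiC2 : Integrable (fun x : Fin 2 → ℝ =>
        2 * (E2 ![t, x 0, x 1] * pd 1 H ![t, x 0, x 1])) volume := hiC.const_mul 2
    have hiD2 : Integrable (fun x : Fin 2 → ℝ =>
        2 * (pd 1 E2 ![t, x 0, x 1] * H ![t, x 0, x 1])) volume := hiD.const_mul 2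
    have hS1 : Integrable (fun x : Fin 2 → ℝ =>
        (pd 0 ε11 ![t, x 0, x 1] * (D1 ![t, x 0, x 1]) ^ 2
          + 2 * pd 0 ε12 ![t, x 0, x 1] * D1 ![t, x 0, x 1] * D2 ![t, x 0, x 1]
          + pd 0 ε22 ![t, x 0, x 1] * (D2 ![t, x 0, x 1]) ^ 2)
          + 2 * (E1 ![t, x 0, x 1] * pd 2 H ![t, x 0, x 1])) volume := hiPsi.add hiA2
    have hS2 : Integrable (fun x : Fin 2 → ℝ =>
        (pd 0 ε11 ![t, x 0, x 1] * (D1 ![t, x 0, x 1]) ^ 2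
          + 2 * pd 0 ε12 ![t, x 0, x 1] * D1 ![t, x 0, x 1] * D2 ![t, x 0, x 1]
          + pd 0 ε22 ![t, x 0, x 1] * (D2 ![t, x 0, x 1]) ^ 2)
          + 2 * (E1 ![t, x 0, x 1] * pd 2 H ![t, x 0, x 1])
          + 2 * (pd 2 E1 ![t, x 0, x 1] * H ![t, x 0, x 1])) volume := hS1.add hiB2
    have hS3 : Integrable (fun x : Fin 2 → ℝ =>
        (pd 0 ε11 ![t, x 0, x 1] * (D1 ![t, x 0, x 1]) ^ 2
          + 2 * pd 0 ε12 ![t, x 0, x 1] * D1 ![t, x 0, x 1] * D2 ![t, x 0, x 1]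
          + pd 0 ε22 ![t, x 0, x 1] * (D2 ![t, x 0, x 1]) ^ 2)
          + 2 * (E1 ![t, x 0, x 1] * pd 2 H ![t, x 0, x 1])
          + 2 * (pd 2 E1 ![t, x 0, x 1] * H ![t, x 0, x 1])
          - 2 * (E2 ![t, x 0, x 1] * pd 1 H ![t, x 0, x 1])) volume := hS2.sub hiC2
    simp only [hfun]
    rw [integral_sub hS3 hiD2, integral_sub hS2 hiC2, integral_add hS1 hiB2,
      integral_add hiPsi hiA2,
      integral_const_mul, integral_const_mul, integral_const_mul, integral_const_mul]
    rw [hibp1, hibp2]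
    ring
  rw [key] at hder
  exact hder
end
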